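/- If X ~ Poisson(λ) and, given X = n, each of the n items is independently marked with probability p, then the number of marked items is Poisson(λp) distributed, the number of unmarked items is Poisson(λ(1-p)) distributed, and these two counts are independent. -/

import Mathlib

/-!
Conditioning on `X = k + m` and multiplying the Poisson weight of `k + m` by the binomial weight
of `k` marked items, the factorials and powers split as
`e^{-λ} λ^{k+m}/(k+m)! · C(k+m,k) p^k (1-p)^m = e^{-λp}(λp)^k/k! · e^{-λ(1-p)}(λ(1-p))^m/m!`,
so the joint mass function of `(K, X - K)` factors into two Poisson mass functions. A joint mass
function of product form summing to one yields both marginals and independence.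
-/

open MeasureTheory ProbabilityTheory Real
open scoped ENNReal Nat

theorem ENNReal.tsum_mul_tsum {ι κ : Type*} (f : ι → ℝ≥0∞) (g : κ → ℝ≥0∞) :
    (∑' i, f i) * ∑' j, g j = ∑' x : ι × κ, f x.1 * g x.2 := by
  rw [ENNReal.tsum_prod (f := fun i j => f i * g j), ← ENNReal.tsum_mul_right]
  exact tsum_congr fun i => ENNReal.tsum_mul_left.symm

theorem tsum_ofReal_poisson {a : ℝ} (ha : 0 ≤ a) :
    ∑' k : ℕ, ENNReal.ofReal (exp (-a) * a ^ k / k !) = 1 := by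
  have h : HasSum (fun k : ℕ => exp (-a) * a ^ k / k !) 1 := hasSum_one_poissonMeasure ⟨a, ha⟩
  rw [← ENNReal.ofReal_tsum_of_nonneg (fun _ => by positivity) h.summable, h.tsum_eq,
    ENNReal.ofReal_one]

theorem poisson_mul_binomial_eq (l p : ℝ) (k m : ℕ) :
    exp (-l) * l ^ (k + m) / (k + m)! * ((k + m).choose k * p ^ k * (1 - p) ^ m) =
      exp (-(l * p)) * (l * p) ^ k / k ! * (exp (-(l * (1 - p))) * (l * (1 - p)) ^ m / m !) := by
  have hfact : ((k + m).choose k : ℝ) * k ! * m ! = (k + m)! := by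
    have h := Nat.choose_mul_factorial_mul_factorial (Nat.le_add_right k m)
    rw [Nat.add_sub_cancel_left] at h
    exact_mod_cast h
  have hchoose : ((k + m).choose k : ℝ) ≠ 0 := by
    exact_mod_cast (Nat.choose_pos (Nat.le_add_right k m)).ne'
  have hexp : exp (-l) = exp (-(l * p)) * exp (-(l * (1 - p))) := by
    rw [← exp_add]; ring_nf
  rw [← hfact, hexp, pow_add, mul_pow, mul_pow]
  field_simp

section Measure

variable {Ω α β : Type*} [MeasurableSpace Ω]

/-- The fibres of `Z` need not be measurable: the hypothesis that their (outer) measures add up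
to the total mass is what replaces countable additivity. -/
theorem measure_preimage_eq_tsum_of_tsum_fiber_eq [Countable α] (μ : Measure Ω)
    [IsFiniteMeasure μ] {Z : Ω → α} (hZ : ∑' a, μ (Z ⁻¹' {a}) = μ Set.univ) (S : Set α) :
    μ (Z ⁻¹' S) = ∑' a : S, μ (Z ⁻¹' {(a : α)}) := by
  have hle : ∀ T : Set α, μ (Z ⁻¹' T) ≤ ∑' a : T, μ (Z ⁻¹' {(a : α)}) := fun T => by
    simpa only [Set.biUnion_preimage_singleton] using
      measure_biUnion_le μ T.to_countable fun a => Z ⁻¹' {(a : α)}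
  have hsplit :
      ∑' a : S, μ (Z ⁻¹' {(a : α)}) + ∑' a : ↥Sᶜ, μ (Z ⁻¹' {(a : α)}) = μ Set.univ := by
    rw [ENNReal.summable.tsum_add_tsum_compl (f := fun a => μ (Z ⁻¹' {a})) ENNReal.summable, hZ]
  have hcompl_ne_top : ∑' a : ↥Sᶜ, μ (Z ⁻¹' {(a : α)}) ≠ ∞ :=
    ne_top_of_le_ne_top (measure_ne_top μ Set.univ) (hsplit ▸ le_add_self)
  refine le_antisymm (hle S) (ENNReal.le_of_add_le_add_right hcompl_ne_top ?_)
  calc ∑' a : S, μ (Z ⁻¹' {(a : α)}) + ∑' a : ↥Sᶜ, μ (Z ⁻¹' {(a : α)})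
      = μ Set.univ := hsplit
    _ ≤ μ (Z ⁻¹' S) + μ (Z ⁻¹' Sᶜ) := measure_univ_le_add_compl _
    _ ≤ μ (Z ⁻¹' S) + ∑' a : ↥Sᶜ, μ (Z ⁻¹' {(a : α)}) := add_le_add le_rfl (hle Sᶜ)

theorem ae_le_of_forall_lt_measure_eq_zero {μ : Measure Ω} {X K : Ω → ℕ}
    (h : ∀ n k, n < k → μ {ω | K ω = k ∧ X ω = n} = 0) : ∀ᵐ ω ∂μ, K ω ≤ X ω := by
  rw [ae_iff]
  refine measure_mono_null (t := ⋃ q : {q : ℕ × ℕ // q.1 < q.2}, {ω | K ω = q.1.2 ∧ X ω = q.1.1})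
    (fun ω hω => Set.mem_iUnion.2 ⟨⟨(X ω, K ω), not_le.1 hω⟩, rfl, rfl⟩)
    (measure_iUnion_null fun q => h _ _ q.2)

theorem measure_eq_and_sub_eq_of_ae_le {μ : Measure Ω} {X K : Ω → ℕ}
    (hle : ∀ᵐ ω ∂μ, K ω ≤ X ω) (k m : ℕ) :
    μ {ω | K ω = k ∧ X ω - K ω = m} = μ {ω | K ω = k ∧ X ω = k + m} := by
  refine measure_congr ?_
  filter_upwards [hle] with ω hω
  change (K ω = k ∧ X ω - K ω = m) = (K ω = k ∧ X ω = k + m)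
  exact propext (by omega)

variable [Countable α] [Countable β] {μ : Measure Ω} [IsProbabilityMeasure μ]
  {U : Ω → α} {V : Ω → β} {f : α → ℝ≥0∞} {g : β → ℝ≥0∞}

theorem measure_preimage_inter_preimage_of_measure_fiber_eq_mul
    (hf : ∑' a, f a = 1) (hg : ∑' b, g b = 1)
    (hUV : ∀ a b, μ {ω | U ω = a ∧ V ω = b} = f a * g b) (s : Set α) (t : Set β) :
    μ (U ⁻¹' s ∩ V ⁻¹' t) = (∑' a : s, f a) * ∑' b : t, g b := by
  set Z : Ω → α × β := fun ω => (U ω, V ω)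
  have hfiber : ∀ x : α × β, μ (Z ⁻¹' {x}) = f x.1 * g x.2 := fun x => by
    simpa only [Z, Set.preimage, Set.mem_singleton_iff, Prod.ext_iff] using hUV x.1 x.2
  have hZ : ∑' x, μ (Z ⁻¹' {x}) = μ Set.univ := by
    rw [measure_univ, tsum_congr hfiber, ← ENNReal.tsum_mul_tsum, hf, hg, one_mul]
  calc μ (U ⁻¹' s ∩ V ⁻¹' t)
      = ∑' x : ↥(s ×ˢ t), f x.1.1 * g x.1.2 := by
        rw [show U ⁻¹' s ∩ V ⁻¹' t = Z ⁻¹' s ×ˢ t from rfl,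
          measure_preimage_eq_tsum_of_tsum_fiber_eq μ hZ]
        exact tsum_congr fun x => hfiber x
    _ = ∑' x : s × t, f x.1 * g x.2 := (Equiv.Set.prod s t).tsum_eq fun x => f x.1 * g x.2
    _ = (∑' a : s, f a) * ∑' b : t, g b :=
        (ENNReal.tsum_mul_tsum (fun a : s => f a) fun b : t => g b).symm

theorem marginals_and_indepFun_of_measure_fiber_eq_mul [MeasurableSpace α] [MeasurableSpace β]
    (hf : ∑' a, f a = 1) (hg : ∑' b, g b = 1)
    (hUV : ∀ a b, μ {ω | U ω = a ∧ V ω = b} = f a * g b) :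
    (∀ a, μ (U ⁻¹' {a}) = f a) ∧ (∀ b, μ (V ⁻¹' {b}) = g b) ∧ IndepFun U V μ := by
  have hrect := measure_preimage_inter_preimage_of_measure_fiber_eq_mul hf hg hUV
  have hU : ∀ s, μ (U ⁻¹' s) = ∑' a : s, f a := fun s => by
    simpa [tsum_univ, hg] using hrect s Set.univ
  have hV : ∀ t, μ (V ⁻¹' t) = ∑' b : t, g b := fun t => by
    simpa [tsum_univ, hf] using hrect Set.univ t
  refine ⟨fun a => by rw [hU, tsum_singleton], fun b => by rw [hV, tsum_singleton], ?_⟩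
  rw [indepFun_iff_measure_inter_preimage_eq_mul]
  exact fun s t _ _ => by rw [hrect, hU, hV]

end Measure

/-- Thinning: if `X` is Poisson(λ) and, given `X = n`, the number of marked items `K`
is binomial(n, p), then `K` is Poisson(λp), `X - K` is Poisson(λ(1-p)), and they are
independent. -/
theorem poisson_thinning
    {Ω : Type*} [MeasureSpace Ω] [IsProbabilityMeasure (ℙ : Measure Ω)]
    (X K : Ω → ℕ) (l p : ℝ) (hl : 0 < l) (hp0 : 0 ≤ p) (hp1 : p ≤ 1)
    (hX : ∀ n : ℕ, ℙ {ω | X ω = n} = ENNReal.ofReal (exp (-l) * l ^ n / n.factorial))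
    (hK : ∀ n k : ℕ, ℙ {ω | K ω = k ∧ X ω = n} =
      ℙ {ω | X ω = n} * ENNReal.ofReal (n.choose k * p ^ k * (1 - p) ^ (n - k))) :
    (∀ k : ℕ, ℙ {ω | K ω = k} = ENNReal.ofReal (exp (-(l * p)) * (l * p) ^ k / k.factorial))
    ∧ (∀ m : ℕ, ℙ {ω | X ω - K ω = m} =
        ENNReal.ofReal (exp (-(l * (1 - p))) * (l * (1 - p)) ^ m / m.factorial))
    ∧ IndepFun K (fun ω => X ω - K ω) ℙ := by
  have hq : 0 ≤ 1 - p := sub_nonneg.2 hp1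
  have hle : ∀ᵐ ω ∂ℙ, K ω ≤ X ω := ae_le_of_forall_lt_measure_eq_zero fun n k hnk => by
    rw [hK, Nat.choose_eq_zero_of_lt hnk]
    simp
  have hjoint : ∀ k m : ℕ, ℙ {ω | K ω = k ∧ X ω - K ω = m} =
      ENNReal.ofReal (exp (-(l * p)) * (l * p) ^ k / k !) *
        ENNReal.ofReal (exp (-(l * (1 - p))) * (l * (1 - p)) ^ m / m !) := fun k m => by
    rw [measure_eq_and_sub_eq_of_ae_le hle, hK, hX, Nat.add_sub_cancel_left,
      ← ENNReal.ofReal_mul (by positivity), poisson_mul_binomial_eq,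
      ENNReal.ofReal_mul (by positivity)]
  exact marginals_and_indepFun_of_measure_fiber_eq_mul
    (tsum_ofReal_poisson (mul_nonneg hl.le hp0)) (tsum_ofReal_poisson (mul_nonneg hl.le hq)) hjoint
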